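/- arXiv:1906.07619 — 2 statements merged into one kernel-verified Lean document; each statement's English description precedes it below -/
import Mathlib

section
/- Let G be a maximal 3-γc-vertex critical graph of order n. Then α(G)·ω(G) ≤ ⌊(n − 1)/2⌋·⌈(n − 1)/2⌉; moreover, α(G)·ω(G) = ((n − 1)/2)² if and only if G is isomorphic to a graph in the class 𝒢₁(l) for some l ≥ 2. -/
/-!
Let `Z` be a maximum independent set and `Q` a maximum clique, so `|Z ∩ Q| ≤ 1`. Since `G - q`
has a connected dominating set of size at most two while `G` has none, every vertex `q` has an
edge `ab` dominating `G - q` with `a, b` not adjacent to `q`. For `q ∈ Q` this edge avoids `Q` and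
cannot lie inside `Z`, so it meets the set `O` of vertices outside `Z ∪ Q`. If `Z ∩ Q = {x}`, the
edges of `x` and of some `q ≠ x` in `Q` give a vertex of `O` not adjacent to `x` and one adjacent
to `x`. Hence `|O| > |Z ∩ Q|`, that is `α + ω ≤ n - 1`, which gives the bound.

In the equality case `α = ω = l` and `n = 2l + 1`. When `Z ∩ Q = {x}` and `O = {u, p}` with
`u ~ x`, either `u ~ p` and `Q` can be replaced by `{u, p}` (then `l = 2`), or `u ≁ p`, edge
criticality makes `p` adjacent to all of `Q - x`, and `Q` can be replaced by `Q - x + p`. Either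
way `G` is covered by a clique `C` and an independent set `I` of size `l` and one more vertex `v`.
The edges dominating `G - q` for `q ∈ C` are then `v z_q` with `z_q ∈ I`, and `q ↦ z_q` is a
bijection `C → I` exhibiting `G` as a member of `𝒢₁(l)`.
-/

open Finset

variable {V : Type*}

/-- `D` is a connected dominating set of `G`: every vertex is in `D` or adjacent to a
vertex of `D`, and the subgraph induced by `D` is connected. -/
def IsConnDomSet (G : SimpleGraph V) (D : Set V) : Prop :=
  (∀ v : V, v ∈ D ∨ ∃ u ∈ D, G.Adj u v) ∧ (G.induce D).Connected

/-- The connected domination number `γc(G)`. -/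
noncomputable def gammaC (G : SimpleGraph V) [Fintype V] : ℕ :=
  sInf {k | ∃ D : Finset V, D.card = k ∧ IsConnDomSet G ↑D}

/-- The independence number `α(G)`. -/
noncomputable def alpha (G : SimpleGraph V) [Fintype V] : ℕ :=
  sSup {k | ∃ I : Finset V, I.card = k ∧ (↑I : Set V).Pairwise fun u v => ¬ G.Adj u v}

/-- The clique number `ω(G)`. -/
noncomputable def omegaNum (G : SimpleGraph V) [Fintype V] : ℕ :=
  sSup {k | ∃ W : Finset V, W.card = k ∧ (↑W : Set V).Pairwise G.Adj}

/-- The minimum degree `δ(G)`. -/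
noncomputable def minDeg (G : SimpleGraph V) [Fintype V] : ℕ :=
  sInf {k | ∃ v : V, (G.neighborSet v).ncard = k}

/-- The vertex connectivity `κ(G)`: the minimum size of a set of vertices whose
deletion leaves a graph that is disconnected or has at most one vertex
(so `κ = n - 1` for the complete graph on `n` vertices). -/
noncomputable def kappa (G : SimpleGraph V) [Fintype V] : ℕ :=
  sInf {k | ∃ S : Finset V, S.card = k ∧
    (¬ (G.induce (↑S : Set V)ᶜ).Connected ∨ ((↑S : Set V)ᶜ).Subsingleton)}

/-- `G` is `3`-`γc`-edge critical: `γc(G) = 3` and adding any missing edge decreases `γc`. -/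
def EdgeCritical3 (G : SimpleGraph V) [Fintype V] : Prop :=
  gammaC G = 3 ∧ ∀ u v : V, u ≠ v → ¬ G.Adj u v →
    gammaC (G ⊔ SimpleGraph.fromEdgeSet {s(u, v)}) < 3

/-- `G` is `3`-`γc`-vertex critical: `G` is `2`-connected, `γc(G) = 3` and deleting any
vertex decreases `γc`. -/
def VertexCritical3 (G : SimpleGraph V) [Fintype V] [DecidableEq V] : Prop :=
  2 ≤ kappa G ∧ gammaC G = 3 ∧ ∀ v : V, gammaC (G.induce {w | w ≠ v}) < 3

/-- `G` is maximal `3`-`γc`-vertex critical. -/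
def MaximalVertexCritical3 (G : SimpleGraph V) [Fintype V] [DecidableEq V] : Prop :=
  EdgeCritical3 G ∧ VertexCritical3 G

/-- `G` is (isomorphic to) a graph in the class `𝒢₁(l)`: there are `2l + 1` distinct
vertices `v`, `q₁, …, q_l`, `z₁, …, z_l` covering all of `G`, the `qᵢ` form a clique,
the `zᵢ` form an independent set, `v` is adjacent exactly to the `zᵢ`, and
`zᵢ` is adjacent to `qⱼ` iff `j ≠ i`. -/
def IsG1 (l : ℕ) (G : SimpleGraph V) : Prop :=
  ∃ (v : V) (q z : Fin l → V),
    Function.Injective q ∧ Function.Injective z ∧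
    (∀ i j, q i ≠ z j) ∧ (∀ i, v ≠ q i) ∧ (∀ i, v ≠ z i) ∧
    (∀ w : V, w = v ∨ (∃ i, w = q i) ∨ (∃ i, w = z i)) ∧
    (∀ i j, G.Adj (q i) (q j) ↔ i ≠ j) ∧
    (∀ i j, ¬ G.Adj (z i) (z j)) ∧
    (∀ i, G.Adj v (z i)) ∧ (∀ i, ¬ G.Adj v (q i)) ∧
    (∀ i j, G.Adj (z i) (q j) ↔ j ≠ i)


open SimpleGraph

section Domination

variable {G : SimpleGraph V}

def PairDominates (G : SimpleGraph V) (a b w : V) : Prop :=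
  w = a ∨ w = b ∨ G.Adj a w ∨ G.Adj b w

theorem PairDominates.symm {a b w : V} (h : PairDominates G a b w) : PairDominates G b a w := by
  unfold PairDominates at *
  tauto

theorem PairDominates.of_adj_left {a b w : V} (h : G.Adj a w) : PairDominates G a b w :=
  Or.inr (Or.inr (Or.inl h))

theorem PairDominates.of_adj_right {a b w : V} (h : G.Adj b w) : PairDominates G a b w :=
  Or.inr (Or.inr (Or.inr h))

theorem gammaC_le_card [Fintype V] {D : Finset V} (hD : IsConnDomSet G ↑D) :
    gammaC G ≤ D.card :=
  Nat.sInf_le ⟨D, rfl, hD⟩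

theorem adj_of_connected_induce_pair {a b : V} (hab : a ≠ b)
    (h : (G.induce {a, b}).Connected) : G.Adj a b := by
  have hne : (⟨a, by simp⟩ : ({a, b} : Set V)) ≠ ⟨b, by simp⟩ :=
    fun he => hab congr($he.1)
  obtain ⟨⟨y, hy⟩, hay⟩ := mem_support_of_reachable hne (h.preconnected _ _)
  rcases hy with rfl | rfl
  · exact absurd hay (G.induce _).irrefl
  · exact hay

theorem isConnDomSet_pair [DecidableEq V] {a b : V} (hab : a = b ∨ G.Adj a b)
    (hdom : ∀ w, PairDominates G a b w) : IsConnDomSet G ↑({a, b} : Finset V) := by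
  refine ⟨fun w => ?_, ?_⟩
  · rcases hdom w with rfl | rfl | h | h
    · exact Or.inl (by simp)
    · exact Or.inl (by simp)
    · exact Or.inr ⟨a, by simp, h⟩
    · exact Or.inr ⟨b, by simp, h⟩
  · rw [coe_pair]
    rcases hab with rfl | hab
    · rw [Set.pair_eq_singleton, induce_singleton_eq_top]
      exact connected_top
    · exact induce_pair_connected_of_adj hab

theorem not_forall_pairDominates [Fintype V] [DecidableEq V] (h3 : gammaC G = 3) {a b : V}
    (hab : a = b ∨ G.Adj a b) : ¬ ∀ w, PairDominates G a b w := fun hdom => by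
  have := gammaC_le_card (isConnDomSet_pair hab hdom)
  have := card_le_two (a := a) (b := b)
  omega

theorem exists_pairDominates_of_gammaC_lt_three [Fintype V] [DecidableEq V]
    (hconn : G.Connected) (hlt : gammaC G < 3) :
    ∃ a b, (a = b ∨ G.Adj a b) ∧ ∀ w, PairDominates G a b w := by
  have hne : {k | ∃ D : Finset V, D.card = k ∧ IsConnDomSet G ↑D}.Nonempty :=
    ⟨_, univ, rfl, fun w => Or.inl (by simp),
      by rw [coe_univ]; exact (induceUnivIso G).connected_iff.mpr hconn⟩
  obtain ⟨D, hcard, hdom, hDconn⟩ := Nat.sInf_mem hne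
  obtain ⟨⟨d, hd⟩⟩ := hDconn.nonempty
  have hpos : 0 < D.card := card_pos.mpr ⟨d, hd⟩
  obtain h1 | h2 : D.card = 1 ∨ D.card = 2 := by
    have : D.card < 3 := hcard ▸ hlt
    omega
  · obtain ⟨a, rfl⟩ := card_eq_one.mp h1
    refine ⟨a, a, Or.inl rfl, fun w => ?_⟩
    rcases hdom w with hw | ⟨d, hd, hdw⟩
    · exact Or.inl (by simpa using hw)
    · obtain rfl : d = a := by simpa using hd
      exact .of_adj_left hdw
  · obtain ⟨a, b, hab, rfl⟩ := card_eq_two.mp h2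
    refine ⟨a, b, Or.inr (adj_of_connected_induce_pair hab (by rwa [← coe_pair])),
      fun w => ?_⟩
    rcases hdom w with hw | ⟨d, hd, hdw⟩
    · simp only [coe_pair, Set.mem_insert_iff, Set.mem_singleton_iff] at hw
      exact hw.elim Or.inl (Or.inr ∘ Or.inl)
    · simp only [coe_pair, Set.mem_insert_iff, Set.mem_singleton_iff] at hd
      rcases hd with rfl | rfl
      exacts [.of_adj_left hdw, .of_adj_right hdw]

/-- `{a, b}` is an edge dominating `G - u` and avoiding the closed neighbourhood of `u`: the
shape of a minimum connected dominating set of `G - u` when `γc(G - u) < 3 = γc(G)`. -/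
structure IsCriticalPair (G : SimpleGraph V) (u a b : V) : Prop where
  adj : G.Adj a b
  not_adj_left : ¬ G.Adj u a
  not_adj_right : ¬ G.Adj u b
  dominates : ∀ w, w ≠ u → PairDominates G a b w

namespace IsCriticalPair

variable {u a b : V}

theorem symm (h : IsCriticalPair G u a b) : IsCriticalPair G u b a :=
  ⟨h.adj.symm, h.not_adj_right, h.not_adj_left, fun w hw => (h.dominates w hw).symm⟩

theorem ne_left (h : IsCriticalPair G u a b) : a ≠ u := by
  rintro rfl
  exact h.not_adj_right h.adj

theorem ne_right (h : IsCriticalPair G u a b) : b ≠ u :=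
  h.symm.ne_left

theorem notMem_clique {Q : Set V} (h : IsCriticalPair G u a b) (hQ : G.IsClique Q)
    (hu : u ∈ Q) : a ∉ Q :=
  fun ha => h.not_adj_left (hQ hu ha h.ne_left.symm)

theorem adj_of_mem_clique {C : Set V} {q : V} (h : IsCriticalPair G u a b) (hC : G.IsClique C)
    (haC : a ∉ C) (hu : u ∈ C) (hq : q ∈ C) (hqu : q ≠ u) (haq : ¬ G.Adj a q) : G.Adj b q := by
  rcases h.dominates q hqu with rfl | rfl | h' | h'
  exacts [absurd hq haC, absurd (hC hu hq hqu.symm) h.not_adj_right, absurd h' haq, h']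

end IsCriticalPair

end Domination

section Criticality

variable [Fintype V] {G : SimpleGraph V}

theorem kappa_le_card {S : Finset V} (h : ¬ (G.induce (↑S : Set V)ᶜ).Connected) :
    kappa G ≤ S.card :=
  Nat.sInf_le ⟨S, rfl, Or.inl h⟩

variable [DecidableEq V]

namespace VertexCritical3

theorem connected (h : VertexCritical3 G) : G.Connected := by
  by_contra hc
  have := (kappa_le_card (G := G) (S := ∅) (by
    rwa [coe_empty, Set.compl_empty, (induceUnivIso G).connected_iff])).trans_eq card_empty
  have := h.1
  omega

theorem connected_induce_ne (h : VertexCritical3 G) (u : V) :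
    (G.induce {w | w ≠ u}).Connected := by
  by_contra hc
  have := (kappa_le_card (G := G) (S := {u}) (by
    rwa [coe_singleton, Set.compl_singleton_eq])).trans_eq (card_singleton u)
  have := h.1
  omega

theorem exists_isCriticalPair (h : VertexCritical3 G) (u : V) :
    ∃ a b, IsCriticalPair G u a b := by
  obtain ⟨⟨a, hau⟩, ⟨b, hbu⟩, hab, hdom⟩ :=
    exists_pairDominates_of_gammaC_lt_three (h.connected_induce_ne u) (h.2.2 u)
  replace hab : a = b ∨ G.Adj a b := hab.imp (congrArg Subtype.val) id
  replace hdom : ∀ w, w ≠ u → PairDominates G a b w := fun w hw => by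
    simpa [PairDominates] using hdom ⟨w, hw⟩
  have hnadj : ∀ c, c = a ∨ c = b → ¬ G.Adj u c := by
    rintro c hc huc
    refine not_forall_pairDominates h.2.1 hab fun w => ?_
    by_cases hw : w = u
    · subst hw
      rcases hc with rfl | rfl
      exacts [.of_adj_left huc.symm, .of_adj_right huc.symm]
    · exact hdom w hw
  refine ⟨a, b, ?_, hnadj a (Or.inl rfl), hnadj b (Or.inr rfl), hdom⟩
  refine hab.resolve_left fun hab => ?_
  subst hab
  -- `a` alone dominates `G - u`, so the edge from `a` to a neighbour `y` of `u` dominates `G`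
  obtain ⟨y, huy⟩ := (mem_support G).mp
    (mem_support_of_reachable (Ne.symm hau) (h.connected.preconnected u a))
  have hay : G.Adj a y := by
    rcases hdom y huy.ne' with rfl | rfl | h' | h'
    exacts [absurd huy (hnadj _ (Or.inl rfl)), absurd huy (hnadj _ (Or.inl rfl)), h', h']
  refine not_forall_pairDominates h.2.1 (Or.inr hay) fun w => ?_
  by_cases hw : w = u
  · rw [hw]
    exact .of_adj_right huy.symm
  · rcases hdom w hw with h' | h' | h' | h'
    exacts [Or.inl h', Or.inl h', .of_adj_left h', .of_adj_left h']

end VertexCritical3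

end Criticality

section EdgeCriticality

variable {G : SimpleGraph V}

theorem adj_of_sup_edge_adj {u v a b : V} (h : (G ⊔ edge u v).Adj a b) :
    G.Adj a b ∨ (a = u ∧ b = v) ∨ (a = v ∧ b = u) := by
  rw [sup_adj, edge_adj] at h
  tauto

theorem pairDominates_of_sup_edge {u v b : V} (huv : u ≠ v)
    (hb : u = b ∨ (G ⊔ edge u v).Adj u b) (hdom : ∀ w, PairDominates (G ⊔ edge u v) u b w) :
    (∀ w, PairDominates G u v w) ∨
      ∃ y, G.Adj u y ∧ ∀ w, w ≠ v → PairDominates G u y w := by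
  by_cases hbuv : b = u ∨ b = v
  · left
    intro w
    rcases hdom w with h | h | h | h
    · exact Or.inl h
    · rcases hbuv with rfl | rfl <;> simp [PairDominates, h]
    all_goals rcases adj_of_sup_edge_adj h with h | h | h <;> grind [PairDominates]
  · right
    push Not at hbuv
    refine ⟨b, ?_, fun w hw => ?_⟩
    · rcases hb with rfl | h
      · exact absurd rfl hbuv.1
      · rcases adj_of_sup_edge_adj h with h | h | h <;> grind
    · rcases hdom w with h | h | h | h
      · exact Or.inl h
      · exact Or.inr (Or.inl h)
      all_goals rcases adj_of_sup_edge_adj h with h | h | h <;> grind [PairDominates]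

theorem EdgeCritical3.pairDominates_of_not_adj [Fintype V] [DecidableEq V]
    (hE : EdgeCritical3 G) (hconn : G.Connected) {u v : V} (huv : u ≠ v) (hn : ¬ G.Adj u v) :
    (∀ w, PairDominates G u v w) ∨
    (∃ y, G.Adj u y ∧ ∀ w, w ≠ v → PairDominates G u y w) ∨
    (∃ y, G.Adj v y ∧ ∀ w, w ≠ u → PairDominates G v y w) := by
  obtain ⟨a, b, hab, hdom⟩ := exists_pairDominates_of_gammaC_lt_three
    (hconn.mono le_sup_left) (hE.2 u v huv hn)
  have key : ∀ a b, (a = b ∨ (G ⊔ edge u v).Adj a b) →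
      (∀ w, PairDominates (G ⊔ edge u v) a b w) → a = u ∨ a = v →
      (∀ w, PairDominates G u v w) ∨
      (∃ y, G.Adj u y ∧ ∀ w, w ≠ v → PairDominates G u y w) ∨
      (∃ y, G.Adj v y ∧ ∀ w, w ≠ u → PairDominates G v y w) := by
    rintro a b hab hdom (rfl | rfl)
    · exact (pairDominates_of_sup_edge huv hab hdom).imp_right Or.inl
    · rw [edge_comm] at hab hdom
      exact (pairDominates_of_sup_edge huv.symm hab hdom).imp (fun h w => (h w).symm) Or.inr
  by_cases ha : a = u ∨ a = v
  · exact key a b hab hdom ha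
  by_cases hb : b = u ∨ b = v
  · exact key b a (hab.imp Eq.symm Adj.symm) (fun w => (hdom w).symm) hb
  have hG : ∀ c, c = a ∨ c = b → ∀ w, (G ⊔ edge u v).Adj c w → G.Adj c w := by
    rintro c hc w h
    rcases adj_of_sup_edge_adj h with h | h | h
    exacts [h, by grind, by grind]
  refine absurd (fun w => ?_)
    (not_forall_pairDominates hE.1 (hab.imp id (hG a (Or.inl rfl) b)))
  rcases hdom w with h | h | h | h
  exacts [Or.inl h, Or.inr (Or.inl h), .of_adj_left (hG a (Or.inl rfl) w h),
    .of_adj_right (hG b (Or.inr rfl) w h)]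

end EdgeCriticality

section CliquesAndIndependentSets

variable {G : SimpleGraph V}

theorem alpha_eq_indepNum [Fintype V] : alpha G = G.indepNum := by
  simp only [alpha, indepNum, isNIndepSet_iff, isIndepSet_iff, and_comm]

theorem omegaNum_eq_cliqueNum [Fintype V] : omegaNum G = G.cliqueNum := by
  simp only [omegaNum, cliqueNum, isNClique_iff, isClique_iff, and_comm]

theorem card_inter_le_one [DecidableEq V] {I C : Finset V} (hI : G.IsIndepSet (I : Set V))
    (hC : G.IsClique (C : Set V)) : (I ∩ C).card ≤ 1 :=
  card_le_one.mpr fun a ha b hb => by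
    simp only [mem_inter] at ha hb
    by_contra hab
    exact hI ha.1 hb.1 hab (hC ha.2 hb.2 hab)

theorem card_le_of_subset_biUnion [DecidableEq V] {ι : Type*} [Fintype ι] {s : Finset V}
    (P : ι → Finset V) (hs : s ⊆ univ.biUnion P) (hP : ∀ i, (s ∩ P i).card ≤ 1) :
    s.card ≤ Fintype.card ι := by
  have : s = univ.biUnion fun i => s ∩ P i := by
    rw [← inter_biUnion, inter_eq_left.mpr hs]
  rw [this]
  simpa using card_biUnion_le_card_mul univ _ 1 fun i _ => hP i

theorem two_le_cliqueNum_of_adj [Finite V] {a b : V} (hab : G.Adj a b) : 2 ≤ G.cliqueNum := by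
  classical
  have hQ : G.IsClique (({a, b} : Finset V) : Set V) := by
    rw [coe_pair]
    exact isClique_pair.mpr fun _ => hab
  have := hQ.card_le_cliqueNum
  rwa [card_pair hab.ne] at this

end CliquesAndIndependentSets

namespace VertexCritical3

variable [Fintype V] [DecidableEq V] {G : SimpleGraph V} {Z Q : Finset V}

theorem two_le_cliqueNum (h : VertexCritical3 G) : 2 ≤ G.cliqueNum := by
  have : 0 < gammaC G := by rw [h.2.1]; norm_num
  obtain ⟨k, D, -, hD⟩ := Nat.nonempty_of_pos_sInf this
  obtain ⟨⟨d, -⟩⟩ := hD.2.nonempty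
  obtain ⟨a, b, hab⟩ := h.exists_isCriticalPair d
  exact two_le_cliqueNum_of_adj hab.adj

theorem exists_notMem_not_adj (h : VertexCritical3 G) (hZ : G.IsIndepSet (Z : Set V))
    (hQ : G.IsClique (Q : Set V)) {q : V} (hq : q ∈ Q) :
    ∃ p, p ∉ Z ∧ p ∉ Q ∧ ¬ G.Adj q p := by
  obtain ⟨a, b, hab⟩ := h.exists_isCriticalPair q
  by_cases ha : a ∈ Z
  · exact ⟨b, fun hb => hZ ha hb hab.adj.ne hab.adj, hab.symm.notMem_clique hQ hq,
      hab.not_adj_right⟩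
  · exact ⟨a, ha, hab.notMem_clique hQ hq, hab.not_adj_left⟩

theorem exists_isCriticalPair_adj (h : VertexCritical3 G) (hZ : G.IsIndepSet (Z : Set V))
    (hQ : G.IsClique (Q : Set V)) {x q : V} (hxZ : x ∈ Z) (hxQ : x ∈ Q) (hq : q ∈ Q)
    (hqx : q ≠ x) : ∃ a b, IsCriticalPair G q a b ∧ G.Adj a x ∧ a ∉ Z ∧ a ∉ Q := by
  obtain ⟨a, b, hab⟩ := h.exists_isCriticalPair q
  have hout : ∀ {a b}, IsCriticalPair G q a b → G.Adj a x →
      ∃ a b, IsCriticalPair G q a b ∧ G.Adj a x ∧ a ∉ Z ∧ a ∉ Q :=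
    fun hab hax => ⟨_, _, hab, hax, fun ha => hZ ha hxZ hax.ne hax, hab.notMem_clique hQ hq⟩
  rcases hab.dominates x hqx.symm with rfl | rfl | hax | hbx
  · exact absurd hxQ (hab.notMem_clique hQ hq)
  · exact absurd hxQ (hab.symm.notMem_clique hQ hq)
  · exact hout hab hax
  · exact hout hab.symm hbx

theorem card_inter_lt_card_compl (h : VertexCritical3 G) (hZ : G.IsIndepSet (Z : Set V))
    (hQ : G.IsClique (Q : Set V)) (hQ2 : 2 ≤ Q.card) : (Z ∩ Q).card < (Z ∪ Q)ᶜ.card := by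
  rcases Nat.le_one_iff_eq_zero_or_eq_one.mp (card_inter_le_one hZ hQ) with h0 | h1
  · obtain ⟨q, hq⟩ := card_pos.mp (by omega : 0 < Q.card)
    obtain ⟨p, hpZ, hpQ, -⟩ := h.exists_notMem_not_adj hZ hQ hq
    rw [h0]
    exact card_pos.mpr ⟨p, by simp [hpZ, hpQ]⟩
  · obtain ⟨x, hx⟩ := card_eq_one.mp h1
    obtain ⟨hxZ, hxQ⟩ := mem_inter.mp (hx ▸ mem_singleton_self x)
    obtain ⟨q, hq, hqx⟩ := exists_mem_ne (by omega : 1 < Q.card) x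
    obtain ⟨u, -, -, hux, huZ, huQ⟩ := h.exists_isCriticalPair_adj hZ hQ hxZ hxQ hq hqx
    obtain ⟨p, hpZ, hpQ, hxp⟩ := h.exists_notMem_not_adj hZ hQ hxQ
    rw [h1]
    exact one_lt_card.mpr ⟨u, by simp [huZ, huQ], p, by simp [hpZ, hpQ],
      fun e => hxp (e ▸ hux.symm)⟩

theorem indepNum_add_cliqueNum_lt_card (h : VertexCritical3 G) :
    G.indepNum + G.cliqueNum < Fintype.card V := by
  obtain ⟨Z, hZ⟩ := G.exists_isNIndepSet_indepNum
  obtain ⟨Q, hQ⟩ := G.exists_isNClique_cliqueNum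
  have := h.card_inter_lt_card_compl hZ.isIndepSet hQ.isClique
    (hQ.card_eq ▸ h.two_le_cliqueNum)
  have := card_union_add_card_inter Z Q
  have := card_compl (Z ∪ Q)
  have := card_le_univ (Z ∪ Q)
  rw [hZ.card_eq, hQ.card_eq] at *
  omega

theorem exists_isCriticalPair_of_cover (h : VertexCritical3 G) {C I : Finset V} {v : V}
    (hC : G.IsClique (C : Set V)) (hI : G.IsIndepSet (I : Set V))
    (hcover : ∀ w, w = v ∨ w ∈ C ∨ w ∈ I) {q : V} (hq : q ∈ C) :
    ∃ z ∈ I, IsCriticalPair G q v z := by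
  obtain ⟨a, b, hab⟩ := h.exists_isCriticalPair q
  have hC' : ∀ c, c ∉ C → c = v ∨ c ∈ I := fun c hc => by
    rcases hcover c with h' | h' | h'
    exacts [Or.inl h', absurd h' hc, Or.inr h']
  rcases hC' a (hab.notMem_clique hC hq) with rfl | ha <;>
    rcases hC' b (hab.symm.notMem_clique hC hq) with rfl | hb
  · exact absurd rfl hab.adj.ne
  · exact ⟨b, hb, hab⟩
  · exact ⟨a, ha, hab.symm⟩
  · exact absurd hab.adj (hI ha hb hab.adj.ne)

theorem isG1_of_cover (h : VertexCritical3 G) {C I : Finset V} {v : V} {l : ℕ}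
    (hC : G.IsClique (C : Set V)) (hI : G.IsIndepSet (I : Set V)) (hCl : C.card = l)
    (hIl : I.card = l) (hcover : ∀ w, w = v ∨ w ∈ C ∨ w ∈ I) : IsG1 l G := by
  choose z' hz'I hz' using fun q (hq : q ∈ C) => h.exists_isCriticalPair_of_cover hC hI hcover hq
  have hvC : v ∉ C := fun hv => (hz' v hv).ne_left rfl
  let e := C.equivFinOfCardEq hCl
  let q : Fin l → V := fun i => e.symm i
  have hqC : ∀ i, q i ∈ C := fun i => (e.symm i).2
  let z : Fin l → V := fun i => z' (q i) (hqC i)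
  have hzI : ∀ i, z i ∈ I := fun i => hz'I _ _
  have hz : ∀ i, IsCriticalPair G (q i) v (z i) := fun i => hz' _ _
  have hq_inj : Function.Injective q := Subtype.val_injective.comp e.symm.injective
  have hzq : ∀ i j, G.Adj (z i) (q j) ↔ j ≠ i := fun i j =>
    ⟨fun hij hji => (hz i).not_adj_right (hji ▸ hij).symm, fun hji =>
      (hz i).adj_of_mem_clique hC hvC (hqC i) (hqC j) (hq_inj.ne hji)
        fun h' => (hz j).not_adj_left h'.symm⟩
  have hz_inj : Function.Injective z := fun i j hij => by
    by_contra hne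
    exact (hzq j j).mp (hij ▸ (hzq i j).mpr (Ne.symm hne)) rfl
  have himage : univ.image z = I :=
    eq_of_subset_of_card_le (image_subset_iff.mpr fun i _ => hzI i)
      (by rw [card_image_of_injective _ hz_inj, card_univ, Fintype.card_fin, hIl])
  refine ⟨v, q, z, hq_inj, hz_inj, ?_, fun i hi => hvC (hi ▸ hqC i), fun i => (hz i).adj.ne,
    fun w => ?_, fun i j => ?_, fun i j hij => hI (hzI i) (hzI j) hij.ne hij,
    fun i => (hz i).adj, fun i hvq => (hz i).not_adj_left hvq.symm, hzq⟩
  · exact fun i j hij => (hz j).symm.notMem_clique hC (hqC j) (hij ▸ hqC i)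
  · rcases hcover w with hw | hw | hw
    · exact Or.inl hw
    · exact Or.inr (Or.inl ⟨e ⟨w, hw⟩, by simp [q]⟩)
    · rw [← himage, mem_image] at hw
      obtain ⟨i, -, rfl⟩ := hw
      exact Or.inr (Or.inr ⟨i, rfl⟩)
  · exact ⟨fun hij hne => G.irrefl (hne ▸ hij),
      fun hij => hC (hqC i) (hqC j) (hq_inj.ne hij)⟩

end VertexCritical3

section SharedVertex

variable {G : SimpleGraph V}

structure SharedVertexConfig (G : SimpleGraph V) (Z Q : Finset V) (x u p : V) : Prop where
  indep : G.IsIndepSet (Z : Set V)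
  clique : G.IsClique (Q : Set V)
  x_mem_Z : x ∈ Z
  x_mem_Q : x ∈ Q
  eq_of_mem_of_mem : ∀ w ∈ Z, w ∈ Q → w = x
  u_notMem_Q : u ∉ Q
  p_notMem_Z : p ∉ Z
  p_notMem_Q : p ∉ Q
  adj_u_x : G.Adj u x
  cover : ∀ w, w ∈ Z ∨ w ∈ Q ∨ w = u ∨ w = p

namespace SharedVertexConfig

variable [Fintype V] [DecidableEq V] {Z Q : Finset V} {x u p : V}

theorem exists_isCriticalPair_x (hc : SharedVertexConfig G Z Q x u p) (h : VertexCritical3 G) :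
    ∃ z ∈ Z, IsCriticalPair G x p z := by
  obtain ⟨a, b, hab⟩ := h.exists_isCriticalPair x
  have hZp : ∀ c, ¬ G.Adj x c → c ∉ Q → c ∈ Z ∨ c = p := fun c hxc hcQ => by
    rcases hc.cover c with hc' | hc' | rfl | hc'
    exacts [Or.inl hc', absurd hc' hcQ, absurd hc.adj_u_x.symm hxc, Or.inr hc']
  rcases hZp a hab.not_adj_left (hab.notMem_clique hc.clique hc.x_mem_Q) with ha | rfl <;>
    rcases hZp b hab.not_adj_right (hab.symm.notMem_clique hc.clique hc.x_mem_Q) with hb | rfl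
  · exact absurd hab.adj (hc.indep ha hb hab.adj.ne)
  · exact ⟨a, ha, hab.symm⟩
  · exact ⟨b, hb, hab⟩
  · exact absurd rfl hab.adj.ne

theorem not_adj_x_p (hc : SharedVertexConfig G Z Q x u p) (h : VertexCritical3 G) :
    ¬ G.Adj x p :=
  let ⟨_, _, hz⟩ := hc.exists_isCriticalPair_x h
  hz.not_adj_left

theorem adj_p_of_mem_Z (hc : SharedVertexConfig G Z Q x u p) (h : VertexCritical3 G) {z : V}
    (hz : z ∈ Z) (hzx : z ≠ x) : G.Adj p z := by
  obtain ⟨z₀, hz₀, hpz₀⟩ := hc.exists_isCriticalPair_x h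
  rcases hpz₀.dominates z hzx with rfl | rfl | h' | h'
  · exact absurd hz hc.p_notMem_Z
  · exact hpz₀.adj
  · exact h'
  · exact absurd h' (hc.indep hz₀ hz h'.ne)

theorem u_ne_p (hc : SharedVertexConfig G Z Q x u p) (h : VertexCritical3 G) : u ≠ p := by
  rintro rfl
  exact hc.not_adj_x_p h hc.adj_u_x.symm

theorem exists_isCriticalPair_of_mem_Q (hc : SharedVertexConfig G Z Q x u p)
    (h : VertexCritical3 G) {q : V} (hq : q ∈ Q) (hqx : q ≠ x) :
    ∃ b, (b ∈ Z ∨ b = p) ∧ IsCriticalPair G q u b := by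
  obtain ⟨a, b, hab, hax, haZ, haQ⟩ :=
    h.exists_isCriticalPair_adj hc.indep hc.clique hc.x_mem_Z hc.x_mem_Q hq hqx
  obtain rfl : a = u := by
    rcases hc.cover a with h' | h' | h' | rfl
    exacts [absurd h' haZ, absurd h' haQ, h', absurd hax.symm (hc.not_adj_x_p h)]
  rcases hc.cover b with hb | hb | rfl | rfl
  · exact ⟨b, Or.inl hb, hab⟩
  · exact absurd hb (hab.symm.notMem_clique hc.clique hq)
  · exact absurd rfl hab.adj.ne
  · exact ⟨_, Or.inr rfl, hab⟩

theorem not_adj_u (hc : SharedVertexConfig G Z Q x u p) (h : VertexCritical3 G) {q : V}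
    (hq : q ∈ Q) (hqx : q ≠ x) : ¬ G.Adj q u :=
  let ⟨_, _, hb⟩ := hc.exists_isCriticalPair_of_mem_Q h hq hqx
  hb.not_adj_left

theorem not_adj_u_of_adj_mem_Z (hc : SharedVertexConfig G Z Q x u p) (h : VertexCritical3 G)
    (hup : ¬ G.Adj u p) {y z : V} (hz : z ∈ Z) (hyz : G.Adj y z) : ¬ G.Adj y u := by
  intro hyu
  rcases hc.cover y with hy | hy | rfl | rfl
  · exact hc.indep hy hz hyz.ne hyz
  · by_cases hyx : y = x
    · exact hc.indep (hyx ▸ hc.x_mem_Z) hz hyz.ne hyz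
    · exact hc.not_adj_u h hy hyx hyu
  · exact G.irrefl hyu
  · exact hup hyu.symm

theorem adj_p_of_not_adj (hc : SharedVertexConfig G Z Q x u p) (h : MaximalVertexCritical3 G)
    (hup : ¬ G.Adj u p) {q : V} (hq : q ∈ Q) (hqx : q ≠ x) : G.Adj p q := by
  obtain ⟨z, hz, hqz⟩ := hc.exists_isCriticalPair_of_mem_Q h.2 hq hqx
  replace hz : z ∈ Z := hz.resolve_right fun hzp => hup (hzp ▸ hqz.adj)
  by_contra hpq
  have huQ := hc.u_notMem_Q
  have hup' := hc.u_ne_p h.2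
  have hpq' : p ≠ q := fun e => hc.p_notMem_Q (e ▸ hq)
  rcases h.1.pairDominates_of_not_adj h.2.connected hpq' hpq with
    hdom | ⟨y, hpy, hdom⟩ | ⟨y, hqy, hdom⟩
  · rcases hdom u with e | rfl | h' | h'
    exacts [hup' e, huQ hq, hup h'.symm, hqz.not_adj_left h']
  · have hyx : G.Adj y x := by
      rcases hdom x hqx.symm with e | rfl | h' | h'
      exacts [absurd (e ▸ hc.x_mem_Q) hc.p_notMem_Q, absurd hpy.symm (hc.not_adj_x_p h.2),
        absurd h'.symm (hc.not_adj_x_p h.2), h']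
    rcases hdom u (fun e => huQ (e ▸ hq)) with e | rfl | h' | h'
    exacts [hup' e, hup hpy.symm, hup h'.symm, hc.not_adj_u_of_adj_mem_Z h.2 hup hc.x_mem_Z hyx h']
  · have hyz : G.Adj y z := by
      rcases hdom z (fun e => hc.p_notMem_Z (e ▸ hz)) with rfl | rfl | h' | h'
      · exact absurd (hc.eq_of_mem_of_mem _ hz hq) hqx
      exacts [absurd hqy hqz.not_adj_right, absurd h' hqz.not_adj_right, h']
    rcases hdom u hup' with rfl | rfl | h' | h'
    exacts [huQ hq, hqz.not_adj_left hqy, hqz.not_adj_left h',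
      hc.not_adj_u_of_adj_mem_Z h.2 hup hz hyz h']

theorem exists_isCriticalPair_p_of_adj (hc : SharedVertexConfig G Z Q x u p)
    (h : VertexCritical3 G) (hup : G.Adj u p) : ∃ qs ∈ Q, IsCriticalPair G p x qs := by
  obtain ⟨a, b, hab⟩ := h.exists_isCriticalPair p
  have hQ : ∀ c, ¬ G.Adj p c → c ≠ p → c ∈ Q := fun c hpc hcp => by
    rcases hc.cover c with hc' | hc' | rfl | rfl
    · by_cases hcx : c = x
      · exact hcx ▸ hc.x_mem_Q
      · exact absurd (hc.adj_p_of_mem_Z h hc' hcx) hpc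
    exacts [hc', absurd hup.symm hpc, absurd rfl hcp]
  have haQ := hQ a hab.not_adj_left hab.ne_left
  have hbQ := hQ b hab.not_adj_right hab.ne_right
  have hx : ∀ c ∈ Q, G.Adj c u → c = x := fun c hc' hcu => by
    by_contra hcx
    exact hc.not_adj_u h hc' hcx hcu
  rcases hab.dominates u (hc.u_ne_p h) with rfl | rfl | h' | h'
  · exact absurd haQ hc.u_notMem_Q
  · exact absurd hbQ hc.u_notMem_Q
  · exact ⟨b, hbQ, hx a haQ h' ▸ hab⟩
  · exact ⟨a, haQ, hx b hbQ h' ▸ hab.symm⟩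

theorem exists_eq_pair_of_adj (hc : SharedVertexConfig G Z Q x u p) (h : VertexCritical3 G)
    (hup : G.Adj u p) : ∃ qs, qs ≠ x ∧ Q = {x, qs} := by
  obtain ⟨qs, hqsQ, hqs⟩ := hc.exists_isCriticalPair_p_of_adj h hup
  have hqsx : qs ≠ x := hqs.adj.ne.symm
  have hqsZ : ∀ z ∈ Z, z ≠ x → G.Adj qs z := fun z hz hzx => by
    rcases hqs.dominates z (fun e => hc.p_notMem_Z (e ▸ hz)) with rfl | rfl | h' | h'
    exacts [absurd rfl hzx, absurd (hc.eq_of_mem_of_mem _ hz hqsQ) hqsx,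
      absurd h' (hc.indep hc.x_mem_Z hz hzx.symm), h']
  have hu : ∀ z ∈ Z, z ≠ x → ¬ G.Adj u z := fun z hz hzx huz => by
    refine not_forall_pairDominates h.2.1 (Or.inr (hqsZ z hz hzx)) fun w => ?_
    rcases hc.cover w with hw | hw | rfl | rfl
    · by_cases hwx : w = x
      · exact .of_adj_left (hwx ▸ hc.clique hqsQ hc.x_mem_Q hqsx)
      · exact .of_adj_left (hqsZ w hw hwx)
    · by_cases hwqs : w = qs
      · exact Or.inl hwqs
      · exact .of_adj_left (hc.clique hqsQ hw (Ne.symm hwqs))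
    · exact .of_adj_right huz.symm
    · exact .of_adj_right (hc.adj_p_of_mem_Z h hz hzx).symm
  refine ⟨qs, hqsx, ext fun q => ⟨fun hq => ?_, fun hq => ?_⟩⟩
  · by_contra hq'
    simp only [mem_insert, mem_singleton, not_or] at hq'
    obtain ⟨b, hb | rfl, hqb⟩ := hc.exists_isCriticalPair_of_mem_Q h hq hq'.1
    · have hbx : b ≠ x := fun e => hqb.not_adj_right (e ▸ hc.clique hq hc.x_mem_Q hq'.1)
      exact hu b hb hbx hqb.adj
    · rcases hqb.dominates qs (Ne.symm hq'.2) with e | e | h' | h'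
      exacts [hc.u_notMem_Q (e ▸ hqsQ), hc.p_notMem_Q (e ▸ hqsQ),
        hc.not_adj_u h hqsQ hqsx h'.symm, hqs.not_adj_right h']
  · simp only [mem_insert, mem_singleton] at hq
    rcases hq with rfl | rfl
    exacts [hc.x_mem_Q, hqsQ]

theorem exists_clique_cover (hc : SharedVertexConfig G Z Q x u p)
    (h : MaximalVertexCritical3 G) :
    ∃ (C : Finset V) (v : V), G.IsClique (C : Set V) ∧ C.card = Q.card ∧
      ∀ w, w = v ∨ w ∈ C ∨ w ∈ Z := by
  by_cases hup : G.Adj u p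
  · obtain ⟨qs, hqsx, rfl⟩ := hc.exists_eq_pair_of_adj h.2 hup
    refine ⟨{u, p}, qs, by simpa using fun _ => hup,
      by rw [card_pair hup.ne, card_pair hqsx.symm], fun w => ?_⟩
    rcases hc.cover w with hw | hw | rfl | rfl
    · exact Or.inr (Or.inr hw)
    · simp only [mem_insert, mem_singleton] at hw
      rcases hw with rfl | rfl
      exacts [Or.inr (Or.inr hc.x_mem_Z), Or.inl rfl]
    all_goals simp
  · refine ⟨insert p (Q.erase x), u, ?_, ?_, fun w => ?_⟩
    · rw [coe_insert, isClique_insert]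
      exact ⟨hc.clique.subset (by simp), fun q hq _ => hc.adj_p_of_not_adj h hup
        (mem_of_mem_erase hq) (ne_of_mem_erase hq)⟩
    · rw [card_insert_of_notMem fun hp => hc.p_notMem_Q (mem_of_mem_erase hp),
        card_erase_of_mem hc.x_mem_Q]
      have := card_pos.mpr ⟨x, hc.x_mem_Q⟩
      omega
    · rcases hc.cover w with hw | hw | rfl | rfl
      · exact Or.inr (Or.inr hw)
      · by_cases hwx : w = x
        · exact Or.inr (Or.inr (hwx ▸ hc.x_mem_Z))
        · exact Or.inr (Or.inl (mem_insert_of_mem (mem_erase.mpr ⟨hwx, hw⟩)))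
      · exact Or.inl rfl
      · exact Or.inr (Or.inl (mem_insert_self _ _))

end SharedVertexConfig

end SharedVertex

theorem VertexCritical3.exists_sharedVertexConfig [Fintype V] [DecidableEq V]
    {G : SimpleGraph V} (h : VertexCritical3 G) {Z Q : Finset V} {x : V}
    (hZ : G.IsIndepSet (Z : Set V)) (hQ : G.IsClique (Q : Set V)) (hQ2 : 2 ≤ Q.card)
    (hx : Z ∩ Q = {x}) (hO : (Z ∪ Q)ᶜ.card = 2) :
    ∃ u p, SharedVertexConfig G Z Q x u p := by
  obtain ⟨hxZ, hxQ⟩ := mem_inter.mp (hx ▸ mem_singleton_self x)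
  obtain ⟨q, hq, hqx⟩ := exists_mem_ne (by omega : 1 < Q.card) x
  obtain ⟨u, -, -, hux, huZ, huQ⟩ := h.exists_isCriticalPair_adj hZ hQ hxZ hxQ hq hqx
  have huO : u ∈ (Z ∪ Q)ᶜ := by simp [huZ, huQ]
  obtain ⟨p, hpO, hpu⟩ := exists_mem_ne (by omega : 1 < (Z ∪ Q)ᶜ.card) u
  have hO2 : {u, p} = (Z ∪ Q)ᶜ := eq_of_subset_of_card_le
    (insert_subset huO (singleton_subset_iff.mpr hpO)) (by rw [hO, card_pair hpu.symm])
  have hpZQ : p ∉ Z ∧ p ∉ Q := by simpa using hpO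
  refine ⟨u, p, hZ, hQ, hxZ, hxQ, fun w hwZ hwQ => ?_, huQ, hpZQ.1, hpZQ.2, hux, fun w => ?_⟩
  · simpa [hx] using mem_inter.mpr ⟨hwZ, hwQ⟩
  · have := mem_compl (s := Z ∪ Q) (a := w)
    rw [← hO2] at this
    simp only [mem_union, mem_insert, mem_singleton] at this
    tauto

theorem MaximalVertexCritical3.isG1 [Fintype V] [DecidableEq V] {G : SimpleGraph V}
    (h : MaximalVertexCritical3 G) {l : ℕ} (hα : G.indepNum = l) (hω : G.cliqueNum = l)
    (hn : Fintype.card V = 2 * l + 1) : IsG1 l G := by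
  obtain ⟨Z, hZ⟩ := G.exists_isNIndepSet_indepNum
  obtain ⟨Q, hQ⟩ := G.exists_isNClique_cliqueNum
  rw [hα] at hZ
  rw [hω] at hQ
  have hO : (Z ∪ Q)ᶜ.card = (Z ∩ Q).card + 1 := by
    have := card_union_add_card_inter Z Q
    have := card_compl (Z ∪ Q)
    rw [hZ.card_eq, hQ.card_eq] at *
    omega
  rcases Nat.le_one_iff_eq_zero_or_eq_one.mp (card_inter_le_one hZ.isIndepSet hQ.isClique)
    with h0 | h1
  · obtain ⟨v, hv⟩ := card_eq_one.mp (hO.trans (by rw [h0]))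
    refine h.2.isG1_of_cover (v := v) hQ.isClique hZ.isIndepSet hQ.card_eq hZ.card_eq
      fun w => ?_
    have := mem_compl (s := Z ∪ Q) (a := w)
    rw [hv] at this
    simp only [mem_union, mem_singleton] at this
    tauto
  · obtain ⟨x, hx⟩ := card_eq_one.mp h1
    obtain ⟨u, p, hc⟩ := h.2.exists_sharedVertexConfig hZ.isIndepSet hQ.isClique
      (by have := h.2.two_le_cliqueNum; have := hQ.card_eq; omega) hx (by omega)
    obtain ⟨C, v, hC, hCQ, hCcover⟩ := hc.exists_clique_cover h
    exact h.2.isG1_of_cover hC hZ.isIndepSet (hCQ.trans hQ.card_eq) hZ.card_eq hCcover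

namespace IsG1

variable [Fintype V] {G : SimpleGraph V} {l : ℕ}

theorem card_eq (hG : IsG1 l G) : Fintype.card V = 2 * l + 1 := by
  obtain ⟨v, q, z, hq, hz, hqz, hvq, hvz, hcover, -⟩ := hG
  let f : Option (Fin l ⊕ Fin l) → V := fun o => o.elim v (Sum.elim q z)
  have hf : Function.Bijective f := by
    refine ⟨?_, fun w => ?_⟩
    · rintro (_ | i | i) (_ | j | j) h <;>
        simp only [f, Option.elim, Sum.elim_inl, Sum.elim_inr] at h
      all_goals first
        | rfl | exact congrArg _ (congrArg _ (hq h)) | exact congrArg _ (congrArg _ (hz h))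
        | exact absurd h (hvq _) | exact absurd h (hvz _) | exact absurd h.symm (hvq _)
        | exact absurd h.symm (hvz _) | exact absurd h (hqz _ _) | exact absurd h.symm (hqz _ _)
    · rcases hcover w with rfl | ⟨i, rfl⟩ | ⟨i, rfl⟩
      exacts [⟨none, rfl⟩, ⟨some (.inl i), rfl⟩, ⟨some (.inr i), rfl⟩]
  rw [← Fintype.card_of_bijective hf]
  simp
  ring

variable [DecidableEq V]

theorem indepNum_eq (hl : 2 ≤ l) (hG : IsG1 l G) : G.indepNum = l := by
  obtain ⟨v, q, z, -, hz, -, -, -, hcover, hqq, hzz, hvz, -, hzq⟩ := hG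
  obtain ⟨I, hI⟩ := G.exists_isNIndepSet_indepNum
  have hQ : G.IsClique (univ.image q : Set V) := by
    simp only [coe_image, coe_univ, Set.image_univ]
    rintro _ ⟨i, rfl⟩ _ ⟨j, rfl⟩ hij
    exact (hqq i j).mpr fun e => hij (e ▸ rfl)
  have hZ : G.IsIndepSet (univ.image z : Set V) := by
    simp only [coe_image, coe_univ, Set.image_univ]
    rintro _ ⟨i, rfl⟩ _ ⟨j, rfl⟩ -
    exact hzz i j
  refine le_antisymm ?_ (by simpa [card_image_of_injective _ hz] using hZ.card_le_indepNum)
  rw [← hI.card_eq]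
  by_cases hv : v ∈ I
  · have hsub : I ⊆ insert v (I ∩ univ.image q) := fun w hw => by
      rcases hcover w with rfl | ⟨i, rfl⟩ | ⟨i, rfl⟩
      · exact mem_insert_self _ _
      · simp [hw]
      · exact absurd (hvz i) (hI.isIndepSet hv hw (hvz i).ne)
    have := card_inter_le_one hI.isIndepSet hQ
    have := (card_le_card hsub).trans (card_insert_le _ _)
    omega
  · -- pair each `z i` with a `q j`, `j ≠ i`, by a fixed-point-free permutation
    obtain ⟨m, rfl⟩ : ∃ m, l = m + 2 := ⟨l - 2, by omega⟩
    have hσ : ∀ i, finRotate (m + 2) i ≠ i := fun i =>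
      Equiv.Perm.mem_support.mp (by simp [support_finRotate])
    refine (card_le_of_subset_biUnion (fun i => {z i, q (finRotate (m + 2) i)})
      (fun w hw => ?_) fun i => card_inter_le_one hI.isIndepSet ?_).trans_eq
        (Fintype.card_fin _)
    · simp only [mem_biUnion, mem_univ, mem_insert, mem_singleton, true_and]
      rcases hcover w with rfl | ⟨i, rfl⟩ | ⟨i, rfl⟩
      · exact absurd hw hv
      · exact ⟨(finRotate (m + 2)).symm i, Or.inr (by simp)⟩
      · exact ⟨i, Or.inl rfl⟩
    · rw [coe_pair]
      exact isClique_pair.mpr fun _ => (hzq _ _).mpr (hσ i)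

theorem cliqueNum_eq (hl : 2 ≤ l) (hG : IsG1 l G) : G.cliqueNum = l := by
  obtain ⟨v, q, z, hq, -, -, hvq_ne, -, hcover, hqq, hzz, -, hvq, hzq⟩ := hG
  obtain ⟨C, hC⟩ := G.exists_isNClique_cliqueNum
  have hQ : G.IsClique (univ.image q : Set V) := by
    simp only [coe_image, coe_univ, Set.image_univ]
    rintro _ ⟨i, rfl⟩ _ ⟨j, rfl⟩ hij
    exact (hqq i j).mpr fun e => hij (e ▸ rfl)
  have hZ : G.IsIndepSet (univ.image z : Set V) := by
    simp only [coe_image, coe_univ, Set.image_univ]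
    rintro _ ⟨i, rfl⟩ _ ⟨j, rfl⟩ -
    exact hzz i j
  refine le_antisymm ?_ (by simpa [card_image_of_injective _ hq] using hQ.card_le_cliqueNum)
  rw [← hC.card_eq]
  by_cases hv : v ∈ C
  · have hsub : C ⊆ insert v (univ.image z ∩ C) := fun w hw => by
      rcases hcover w with rfl | ⟨i, rfl⟩ | ⟨i, rfl⟩
      · exact mem_insert_self _ _
      · exact absurd (hC.isClique hv hw (hvq_ne i)) (hvq i)
      · simp [hw]
    have := card_inter_le_one hZ hC.isClique
    have := (card_le_card hsub).trans (card_insert_le _ _)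
    omega
  · refine (card_le_of_subset_biUnion (fun i => {z i, q i}) (fun w hw => ?_)
      fun i => ?_).trans_eq (Fintype.card_fin _)
    · simp only [mem_biUnion, mem_univ, mem_insert, mem_singleton, true_and]
      rcases hcover w with rfl | ⟨i, rfl⟩ | ⟨i, rfl⟩
      exacts [absurd hw hv, ⟨i, Or.inr rfl⟩, ⟨i, Or.inl rfl⟩]
    · rw [inter_comm]
      refine card_inter_le_one ?_ hC.isClique
      rw [coe_pair]
      exact Set.pairwise_pair.mpr fun _ =>
        ⟨fun h' => (hzq i i).mp h' rfl, fun h' => (hzq i i).mp h'.symm rfl⟩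

end IsG1

theorem mul_le_div_two_mul_succ_div_two {a b s : ℕ} (h : a + b ≤ s) :
    a * b ≤ s / 2 * ((s + 1) / 2) := by
  obtain ⟨k, rfl | rfl⟩ := Nat.even_or_odd' s
  · rw [show 2 * k / 2 = k by omega, show (2 * k + 1) / 2 = k by omega]
    nlinarith [sq_nonneg ((a : ℤ) - b)]
  · rw [show (2 * k + 1) / 2 = k by omega, show (2 * k + 1 + 1) / 2 = k + 1 by omega]
    nlinarith [sq_nonneg ((a : ℤ) - b)]

theorem eq_of_cast_mul_eq_sq {a b n : ℕ} (h : a + b < n)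
    (heq : ((a * b : ℕ) : ℚ) = (((n : ℚ) - 1) / 2) ^ 2) : a = b ∧ n = 2 * a + 1 := by
  have h' : (a : ℚ) + b + 1 ≤ n := by exact_mod_cast h
  push_cast at heq
  have hab : (a : ℚ) = b := by nlinarith [sq_nonneg ((a : ℚ) - b)]
  have hn : (n : ℚ) = 2 * a + 1 := by nlinarith
  exact ⟨by exact_mod_cast hab, by exact_mod_cast hn⟩

/-- a maximal `3`-`γc`-vertex critical graph of order `n` satisfies
`α(G)·ω(G) ≤ ⌊(n-1)/2⌋·⌈(n-1)/2⌉`; moreover `α(G)·ω(G) = ((n-1)/2)²` (as rationals)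
if and only if `G` is (isomorphic to) a graph in the class `𝒢₁(l)` for some `l ≥ 2`. -/
theorem stmt_9 (G : SimpleGraph V) [Fintype V] [DecidableEq V]
    (h : MaximalVertexCritical3 G) :
    alpha G * omegaNum G ≤ (Fintype.card V - 1) / 2 * ((Fintype.card V - 1 + 1) / 2) ∧
    (((alpha G * omegaNum G : ℕ) : ℚ) = (((Fintype.card V : ℚ) - 1) / 2) ^ 2 ↔
      ∃ l : ℕ, 2 ≤ l ∧ IsG1 l G) := by
  rw [alpha_eq_indepNum, omegaNum_eq_cliqueNum]
  have hlt := h.2.indepNum_add_cliqueNum_lt_card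
  refine ⟨mul_le_div_two_mul_succ_div_two (by omega), fun heq => ?_, ?_⟩
  · obtain ⟨hαω, hn⟩ := eq_of_cast_mul_eq_sq hlt heq
    exact ⟨_, hαω ▸ h.2.two_le_cliqueNum, h.isG1 rfl hαω.symm hn⟩
  · rintro ⟨l, hl, hG⟩
    rw [hG.indepNum_eq hl, hG.cliqueNum_eq hl, hG.card_eq]
    push_cast
    ring
end

section
/- For every s ≥ 3, the graph G₃(s) is regular of degree 3s − 2, has independence number α(G₃(s)) = s, and has vertex connectivity κ(G₃(s)) = 2s; in particular α(G₃(s)) < κ(G₃(s)) < δ(G₃(s)). -/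
open Finset

variable {V : Type*}

/-- The graph `G₃(s)` on the `4s` vertices `(0, i) = rᵢ`, `(1, i) = tᵢ`, `(2, i) = wᵢ`,
`(3, i) = zᵢ`: `R` and `Z` are cliques, `T` and `W` are independent sets, `rᵢ` is
adjacent to every vertex of `T ∪ W` except `tᵢ`, `tᵢ` is adjacent to every vertex of
`W ∪ Z` except `wᵢ`, `wᵢ` is adjacent to every vertex of `Z` except `zᵢ`, and there
are no edges between `R` and `Z`. -/
def G3 (s : ℕ) : SimpleGraph (Fin 4 × Fin s) :=
  SimpleGraph.fromRel fun a b =>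
    (a.1 = 0 ∧ b.1 = 0 ∧ a.2 ≠ b.2) ∨
    (a.1 = 3 ∧ b.1 = 3 ∧ a.2 ≠ b.2) ∨
    (a.1 = 0 ∧ b.1 = 1 ∧ a.2 ≠ b.2) ∨
    (a.1 = 0 ∧ b.1 = 2) ∨
    (a.1 = 1 ∧ b.1 = 2 ∧ a.2 ≠ b.2) ∨
    (a.1 = 1 ∧ b.1 = 3) ∨
    (a.1 = 2 ∧ b.1 = 3 ∧ a.2 ≠ b.2)

/-!
An independent set with two vertices in `T` (or in `W`) lies inside `T` (resp. `W`), since every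
other vertex is adjacent to one of them; otherwise it meets every layer at most once and misses
`R` or `W`, so it has at most `3 ≤ s` vertices.

Deleting `T ∪ W` separates `R` from `Z`. Conversely, let more than `2s` vertices survive. If some
`rₚ` and some `z_q` survive, the survivors in `R ∪ W` form a star around `rₚ`, those in `T ∪ Z`
a star around `z_q`, and counting finds an edge between the two stars. If all of `Z` (or `R`) is
deleted, the star around a surviving `rₚ` (resp. `z_q`) dominates the survivors.
-/

namespace SimpleGraph

variable {V : Type*} {G : SimpleGraph V}

lemma induce_connected_of_dominating {s t : Set V} (hts : t ⊆ s) (ht : (G.induce t).Connected)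
    (hdom : ∀ v ∈ s, v ∉ t → ∃ u ∈ t, G.Adj u v) : (G.induce s).Connected := by
  obtain ⟨⟨u, hu⟩⟩ := ht.nonempty
  refine G.induce_connected_of_patches u (hts hu) fun {v} hv => ?_
  by_cases hvt : v ∈ t
  · exact ⟨t, hts, hu, hvt, ht.preconnected _ _⟩
  obtain ⟨w, hw, hwv⟩ := hdom v hv hvt
  have hconn : (G.induce (t ∪ {v})).Connected :=
    connected_induce_union ht.preconnected (by simp) hw rfl hwv
  exact ⟨t ∪ {v}, Set.union_subset hts (Set.singleton_subset_iff.2 hv), Or.inl hu, Or.inr rfl,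
    hconn.preconnected _ _⟩

lemma not_connected_induce_union {s t : Set V} {u v : V} (hu : u ∈ s) (hv : v ∈ t)
    (hst : Disjoint s t) (hadj : ∀ x ∈ s, ∀ y ∈ t, ¬ G.Adj x y) :
    ¬ (G.induce (s ∪ t)).Connected := fun h => by
  obtain ⟨p⟩ := h.preconnected ⟨u, Or.inl hu⟩ ⟨v, Or.inr hv⟩
  obtain ⟨d, -, hd, hd'⟩ := p.exists_boundary_dart {x | x.1 ∈ s} hu (hst.notMem_of_mem_right hv)
  exact hadj _ hd _ (d.snd.2.resolve_left hd') d.adj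

end SimpleGraph

section Layer

variable {α β : Type*} [DecidableEq α] [DecidableEq β] [Fintype β]

def layer (C : Finset (α × β)) (a : α) : Finset β := univ.filter fun b => (a, b) ∈ C

@[simp] lemma mem_layer {C : Finset (α × β)} {a : α} {b : β} : b ∈ layer C a ↔ (a, b) ∈ C := by
  simp [layer]

lemma card_layer_le (C : Finset (α × β)) (a : α) : (layer C a).card ≤ Fintype.card β :=
  card_le_univ _

lemma card_eq_sum_card_layer [Fintype α] (C : Finset (α × β)) :
    C.card = ∑ a, (layer C a).card := by
  calc C.card = ∑ x : α × β, if x ∈ C then 1 else 0 := by simp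
    _ = ∑ a, ∑ b, if (a, b) ∈ C then 1 else 0 := Fintype.sum_prod_type _
    _ = ∑ a, (layer C a).card := by simp only [sum_boole, Nat.cast_id, layer]

end Layer

instance (s : ℕ) : DecidableRel (G3 s).Adj := fun a b =>
  decidable_of_iff _ (SimpleGraph.fromRel_adj _ a b).symm

namespace G3

variable {s : ℕ} {i j : Fin s}

@[simp] lemma adj_rr : (G3 s).Adj (0, i) (0, j) ↔ i ≠ j := by
  simp [G3, Prod.ext_iff]; tauto
@[simp] lemma adj_rt : (G3 s).Adj (0, i) (1, j) ↔ i ≠ j := by simp [G3, Prod.ext_iff]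
@[simp] lemma adj_rw : (G3 s).Adj (0, i) (2, j) := by simp [G3, Prod.ext_iff]
@[simp] lemma not_adj_rz : ¬ (G3 s).Adj (0, i) (3, j) := by simp [G3, Prod.ext_iff]
@[simp] lemma not_adj_tt : ¬ (G3 s).Adj (1, i) (1, j) := by simp [G3, Prod.ext_iff]
@[simp] lemma adj_tw : (G3 s).Adj (1, i) (2, j) ↔ i ≠ j := by simp [G3, Prod.ext_iff]
@[simp] lemma adj_tz : (G3 s).Adj (1, i) (3, j) := by simp [G3, Prod.ext_iff]
@[simp] lemma not_adj_ww : ¬ (G3 s).Adj (2, i) (2, j) := by simp [G3, Prod.ext_iff]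
@[simp] lemma adj_wz : (G3 s).Adj (2, i) (3, j) ↔ i ≠ j := by simp [G3, Prod.ext_iff]
@[simp] lemma adj_zz : (G3 s).Adj (3, i) (3, j) ↔ i ≠ j := by
  simp [G3, Prod.ext_iff]; tauto

@[simp] lemma adj_tr : (G3 s).Adj (1, i) (0, j) ↔ j ≠ i := by rw [SimpleGraph.adj_comm, adj_rt]
@[simp] lemma adj_wr : (G3 s).Adj (2, i) (0, j) := adj_rw.symm
@[simp] lemma not_adj_zr : ¬ (G3 s).Adj (3, i) (0, j) := fun h => not_adj_rz h.symm
@[simp] lemma adj_wt : (G3 s).Adj (2, i) (1, j) ↔ j ≠ i := by rw [SimpleGraph.adj_comm, adj_tw]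
@[simp] lemma adj_zt : (G3 s).Adj (3, i) (1, j) := adj_tz.symm
@[simp] lemma adj_zw : (G3 s).Adj (3, i) (2, j) ↔ j ≠ i := by rw [SimpleGraph.adj_comm, adj_wz]

lemma card_eq_add_card_layer (C : Finset (Fin 4 × Fin s)) :
    C.card = (layer C 0).card + (layer C 1).card + (layer C 2).card + (layer C 3).card := by
  rw [card_eq_sum_card_layer, Fin.sum_univ_four]

lemma card_layer_le_self (C : Finset (Fin 4 × Fin s)) (k : Fin 4) : (layer C k).card ≤ s :=
  (card_layer_le C k).trans_eq (Fintype.card_fin s)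

lemma degree_eq (v : Fin 4 × Fin s) : (G3 s).degree v = 3 * s - 2 := by
  obtain ⟨k, i⟩ := v
  rw [← SimpleGraph.card_neighborFinset_eq_degree, card_eq_sum_card_layer, Fin.sum_univ_four]
  fin_cases k <;> simp [layer, filter_ne', filter_ne] <;> omega

lemma ncard_neighborSet (v : Fin 4 × Fin s) : ((G3 s).neighborSet v).ncard = 3 * s - 2 := by
  rw [← Nat.card_coe_set_eq, Nat.card_eq_fintype_card,
    SimpleGraph.card_neighborSet_eq_degree, degree_eq]

lemma adj_or_adj_of_ne {k l : Fin 4} (hk : k = 1 ∨ k = 2) (hlk : l ≠ k) (m : Fin s) {a b : Fin s}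
    (hab : a ≠ b) : (G3 s).Adj (l, m) (k, a) ∨ (G3 s).Adj (l, m) (k, b) := by
  have := hab.ne_or_ne m
  rcases hk with rfl | rfl <;> fin_cases l <;> simp_all [ne_comm]

section IndepSet

variable {I : Finset (Fin 4 × Fin s)}

lemma layer_eq_empty_of_one_lt_card (hI : (G3 s).IsIndepSet I) {k l : Fin 4}
    (hk : k = 1 ∨ k = 2) (hcard : 1 < (layer I k).card) (hlk : l ≠ k) : layer I l = ∅ := by
  obtain ⟨a, ha, b, hb, hab⟩ := one_lt_card.1 hcard
  refine eq_empty_of_forall_notMem fun m hm => ?_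
  rw [mem_layer] at ha hb hm
  rcases adj_or_adj_of_ne hk hlk m hab with h | h
  · exact hI hm ha (fun h' => hlk (congrArg Prod.fst h')) h
  · exact hI hm hb (fun h' => hlk (congrArg Prod.fst h')) h

lemma card_layer_le_one (hI : (G3 s).IsIndepSet I) {k : Fin 4} (hk : k = 0 ∨ k = 3) :
    (layer I k).card ≤ 1 := by
  refine card_le_one.2 fun a ha b hb => by_contra fun hab => ?_
  rw [mem_layer] at ha hb
  refine hI ha hb (fun h => hab (congrArg Prod.snd h)) ?_
  rcases hk with rfl | rfl <;> simpa using hab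

lemma layer_r_eq_empty_or_layer_w_eq_empty (hI : (G3 s).IsIndepSet I) :
    layer I 0 = ∅ ∨ layer I 2 = ∅ := by
  by_contra! h
  obtain ⟨⟨a, ha⟩, ⟨b, hb⟩⟩ := h
  rw [mem_layer] at ha hb
  exact hI ha hb (by simp) adj_rw

lemma card_le_of_isIndepSet (hs : 3 ≤ s) (hI : (G3 s).IsIndepSet I) : I.card ≤ s := by
  have hle := card_layer_le_self I
  rw [card_eq_add_card_layer]
  by_cases h1 : 1 < (layer I 1).card
  · simp [layer_eq_empty_of_one_lt_card hI (.inl rfl) h1, hle]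
  by_cases h2 : 1 < (layer I 2).card
  · simp [layer_eq_empty_of_one_lt_card hI (.inr rfl) h2, hle]
  have h0 := card_layer_le_one hI (.inl rfl)
  have h3 := card_layer_le_one hI (.inr rfl)
  rcases layer_r_eq_empty_or_layer_w_eq_empty hI with h | h <;> simp only [h, card_empty] <;> omega

end IndepSet

section Connectivity

variable {C : Finset (Fin 4 × Fin s)}

def sideRW (C : Finset (Fin 4 × Fin s)) : Set (Fin 4 × Fin s) := {x | x ∈ C ∧ (x.1 = 0 ∨ x.1 = 2)}

def sideTZ (C : Finset (Fin 4 × Fin s)) : Set (Fin 4 × Fin s) := {x | x ∈ C ∧ (x.1 = 1 ∨ x.1 = 3)}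

lemma sideRW_union_sideTZ : sideRW C ∪ sideTZ C = ↑C := by
  ext ⟨k, i⟩
  fin_cases k <;> simp [sideRW, sideTZ]

lemma connected_induce_sideRW {p : Fin s} (hp : p ∈ layer C 0) :
    ((G3 s).induce (sideRW C)).Connected := by
  rw [mem_layer] at hp
  refine SimpleGraph.induce_connected_of_dominating (t := {(0, p)}) (by simp [sideRW, hp])
    (by simp) fun ⟨k, i⟩ ⟨_, hk⟩ hne => ⟨(0, p), rfl, ?_⟩
  rcases hk with rfl | rfl
  · simpa [eq_comm] using hne
  · exact adj_rw

lemma connected_induce_sideTZ {q : Fin s} (hq : q ∈ layer C 3) :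
    ((G3 s).induce (sideTZ C)).Connected := by
  rw [mem_layer] at hq
  refine SimpleGraph.induce_connected_of_dominating (t := {(3, q)}) (by simp [sideTZ, hq])
    (by simp) fun ⟨k, i⟩ ⟨_, hk⟩ hne => ⟨(3, q), rfl, ?_⟩
  rcases hk with rfl | rfl
  · exact adj_zt
  · simpa [eq_comm] using hne

lemma exists_adj_sideRW_sideTZ (hs : 3 ≤ s) (hC : 2 * s < C.card) {p q : Fin s}
    (hp : p ∈ layer C 0) (hq : q ∈ layer C 3) :
    ∃ x ∈ sideRW C, ∃ y ∈ sideTZ C, (G3 s).Adj x y := by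
  have hcard := card_eq_add_card_layer C
  have := card_layer_le_self C 0
  have := card_layer_le_self C 3
  by_cases h1 : 1 < (layer C 1).card
  · obtain ⟨j, hj, hjp⟩ := exists_mem_ne h1 p
    exact ⟨(0, p), ⟨mem_layer.1 hp, by simp⟩, (1, j), ⟨mem_layer.1 hj, by simp⟩,
      by simpa using hjp.symm⟩
  by_cases h2 : 1 < (layer C 2).card
  · obtain ⟨j, hj, hjq⟩ := exists_mem_ne h2 q
    exact ⟨(2, j), ⟨mem_layer.1 hj, by simp⟩, (3, q), ⟨mem_layer.1 hq, by simp⟩, by simpa⟩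
  rcases (layer C 1).eq_empty_or_nonempty with h1e | ⟨j, hj⟩
  · obtain ⟨j, hj⟩ : (layer C 2).Nonempty := by
      rw [h1e, card_empty] at hcard
      rw [← card_pos]; omega
    obtain ⟨i, hi, hij⟩ := exists_mem_ne (show 1 < (layer C 3).card by omega) j
    exact ⟨(2, j), ⟨mem_layer.1 hj, by simp⟩, (3, i), ⟨mem_layer.1 hi, by simp⟩,
      by simpa using hij.symm⟩
  · obtain ⟨i, hi, hij⟩ := exists_mem_ne (show 1 < (layer C 0).card by omega) j
    exact ⟨(0, i), ⟨mem_layer.1 hi, by simp⟩, (1, j), ⟨mem_layer.1 hj, by simp⟩, by simpa⟩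

lemma connected_induce_of_layer_z_eq_empty (hs : 2 ≤ s) (hC : 2 * s < C.card)
    (hZ : layer C 3 = ∅) : ((G3 s).induce ↑C).Connected := by
  have hcard := card_eq_add_card_layer C
  rw [hZ, card_empty] at hcard
  have := card_layer_le_self C 0
  have := card_layer_le_self C 1
  have := card_layer_le_self C 2
  obtain ⟨p, hp⟩ : (layer C 0).Nonempty := by rw [← card_pos]; omega
  refine SimpleGraph.induce_connected_of_dominating (fun x hx => hx.1)
    (connected_induce_sideRW hp) fun ⟨k, j⟩ hv hne => ?_
  have hk : k = 1 := by
    fin_cases k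
    · exact absurd ⟨hv, .inl rfl⟩ hne
    · rfl
    · exact absurd ⟨hv, .inr rfl⟩ hne
    · simpa [hZ] using (mem_layer (a := 3)).2 hv
  subst hk
  by_cases h0 : 1 < (layer C 0).card
  · obtain ⟨i, hi, hij⟩ := exists_mem_ne h0 j
    exact ⟨(0, i), ⟨mem_layer.1 hi, by simp⟩, by simpa⟩
  · obtain ⟨i, hi, hij⟩ := exists_mem_ne (show 1 < (layer C 2).card by omega) j
    exact ⟨(2, i), ⟨mem_layer.1 hi, by simp⟩, by simpa using hij.symm⟩

lemma connected_induce_of_layer_r_eq_empty (hs : 2 ≤ s) (hC : 2 * s < C.card)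
    (hR : layer C 0 = ∅) : ((G3 s).induce ↑C).Connected := by
  have hcard := card_eq_add_card_layer C
  rw [hR, card_empty] at hcard
  have := card_layer_le_self C 1
  have := card_layer_le_self C 2
  have := card_layer_le_self C 3
  obtain ⟨q, hq⟩ : (layer C 3).Nonempty := by rw [← card_pos]; omega
  refine SimpleGraph.induce_connected_of_dominating (fun x hx => hx.1)
    (connected_induce_sideTZ hq) fun ⟨k, j⟩ hv hne => ?_
  have hk : k = 2 := by
    fin_cases k
    · simpa [hR] using (mem_layer (a := 0)).2 hv
    · exact absurd ⟨hv, .inl rfl⟩ hne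
    · rfl
    · exact absurd ⟨hv, .inr rfl⟩ hne
  subst hk
  by_cases h3 : 1 < (layer C 3).card
  · obtain ⟨i, hi, hij⟩ := exists_mem_ne h3 j
    exact ⟨(3, i), ⟨mem_layer.1 hi, by simp⟩, by simpa using hij.symm⟩
  · obtain ⟨i, hi, hij⟩ := exists_mem_ne (show 1 < (layer C 1).card by omega) j
    exact ⟨(1, i), ⟨mem_layer.1 hi, by simp⟩, by simpa using hij⟩

lemma connected_induce_of_two_mul_lt_card (hs : 3 ≤ s) (hC : 2 * s < C.card) :
    ((G3 s).induce ↑C).Connected := by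
  rcases (layer C 0).eq_empty_or_nonempty with hR | ⟨p, hp⟩
  · exact connected_induce_of_layer_r_eq_empty (by omega) hC hR
  rcases (layer C 3).eq_empty_or_nonempty with hZ | ⟨q, hq⟩
  · exact connected_induce_of_layer_z_eq_empty (by omega) hC hZ
  obtain ⟨x, hx, y, hy, hxy⟩ := exists_adj_sideRW_sideTZ hs hC hp hq
  rw [← sideRW_union_sideTZ]
  exact SimpleGraph.connected_induce_union (connected_induce_sideRW hp).preconnected
    (connected_induce_sideTZ hq).preconnected hx hy hxy

def middle (s : ℕ) : Finset (Fin 4 × Fin s) := {1, 2} ×ˢ univ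

lemma card_middle : (middle s).card = 2 * s := by simp [middle]

lemma not_connected_induce_compl_middle (hs : 0 < s) :
    ¬ ((G3 s).induce (↑(middle s))ᶜ).Connected := by
  have hRZ : (↑(middle s) : Set (Fin 4 × Fin s))ᶜ = {x | x.1 = 0} ∪ {x | x.1 = 3} := by
    ext ⟨k, i⟩
    fin_cases k <;> simp [middle]
  rw [hRZ]
  refine SimpleGraph.not_connected_induce_union (u := (0, ⟨0, hs⟩)) (v := (3, ⟨0, hs⟩)) rfl rfl
    ?_ fun ⟨k, i⟩ hk ⟨l, j⟩ hl => ?_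
  · exact Set.disjoint_left.2 fun x h0 h3 => by simp_all
  · obtain rfl : k = 0 := hk
    obtain rfl : l = 3 := hl
    exact not_adj_rz

end Connectivity

lemma alpha_eq (hs : 3 ≤ s) : alpha (G3 s) = s := by
  refine IsGreatest.csSup_eq ⟨⟨{1} ×ˢ univ, by simp, ?_⟩, ?_⟩
  · rintro ⟨k, i⟩ hx ⟨l, j⟩ hy -
    simp only [coe_product, coe_singleton, coe_univ, Set.mem_prod, Set.mem_singleton_iff,
      Set.mem_univ, and_true] at hx hy
    subst hx hy
    exact not_adj_tt
  · rintro k ⟨I, rfl, hI⟩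
    exact card_le_of_isIndepSet hs hI

lemma kappa_eq (hs : 3 ≤ s) : kappa (G3 s) = 2 * s := by
  refine IsLeast.csInf_eq
    ⟨⟨middle s, card_middle, .inl (not_connected_induce_compl_middle (by omega))⟩, ?_⟩
  rintro k ⟨S, rfl, hS⟩
  by_contra! hlt
  have hcard : 2 * s < Sᶜ.card := by
    rw [card_compl, Fintype.card_prod, Fintype.card_fin, Fintype.card_fin]; omega
  rw [← coe_compl] at hS
  rcases hS with hdis | hsub
  · exact hdis (connected_induce_of_two_mul_lt_card hs hcard)
  · exact (one_lt_card_iff_nontrivial.1 (by omega)).not_subsingleton hsub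

lemma minDeg_eq (hs : 0 < s) : minDeg (G3 s) = 3 * s - 2 := by
  refine IsLeast.csInf_eq ⟨⟨(0, ⟨0, hs⟩), ncard_neighborSet _⟩, ?_⟩
  rintro k ⟨v, rfl⟩
  exact (ncard_neighborSet v).ge

end G3

/-- for every `s ≥ 3`, the graph `G₃(s)` is regular of degree `3s - 2`,
has independence number `s` and vertex connectivity `2s`; in particular
`α(G₃(s)) < κ(G₃(s)) < δ(G₃(s))`. -/
theorem stmt_16 (s : ℕ) (hs : 3 ≤ s) :
    (∀ v : Fin 4 × Fin s, ((G3 s).neighborSet v).ncard = 3 * s - 2) ∧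
    alpha (G3 s) = s ∧ kappa (G3 s) = 2 * s ∧
    alpha (G3 s) < kappa (G3 s) ∧ kappa (G3 s) < minDeg (G3 s) := by
  rw [G3.alpha_eq hs, G3.kappa_eq hs, G3.minDeg_eq (by omega)]
  exact ⟨G3.ncard_neighborSet, rfl, rfl, by omega, by omega⟩
end
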